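/- arXiv:math/9811085 — 4 statements merged into one kernel-verified Lean document; each statement's English description precedes it below -/
import Mathlib

section
/- Let K be a finite cubical complex whose 1-skeleton graph is bipartite with parts B and W (every edge has one endpoint in each part), and suppose K is n-Eulerian with n ≠ 0, meaning the link of each vertex has Euler characteristic n. Then |B| = |W|, and in particular K has an even number of vertices. -/
/-- A face of a cubical complex sitting inside the `N`-cube is encoded as an
element of `{0,1,*}^N`, i.e. a function `Fin N → Option Bool` where `none` means
a free coordinate.  Its dimension is the number of free coordinates. -/
def cubeDim {N : ℕ} (g : Fin N → Option Bool) : ℕ :=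
  (Finset.univ.filter fun j => g j = none).card

/-- A face is a vertex iff all of its coordinates are fixed. -/
def isVert {N : ℕ} (g : Fin N → Option Bool) : Prop := ∀ j, g j ≠ none

instance {N : ℕ} (g : Fin N → Option Bool) : Decidable (isVert g) := by
  unfold isVert; infer_instance

/-- `g` is a (sub)face of `h`. -/
def faceLe {N : ℕ} (g h : Fin N → Option Bool) : Prop :=
  ∀ j, h j = none ∨ h j = g j

instance {N : ℕ} (g h : Fin N → Option Bool) : Decidable (faceLe g h) := by
  unfold faceLe; infer_instance

/-- A (finite) cubical complex: a collection of faces of the `N`-cube closed under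
taking subfaces. -/
def IsCubicalComplex {N : ℕ} (K : Finset (Fin N → Option Bool)) : Prop :=
  ∀ g ∈ K, ∀ h : Fin N → Option Bool, (∀ j, g j ≠ none → h j = g j) → h ∈ K

/-- Key lemma: in a bicolored cubical complex, every face of dimension at least 1
has equally many vertices of each color. -/
lemma flip_card_eq {N : ℕ} (K : Finset (Fin N → Option Bool))
    (hK : IsCubicalComplex K) (color : (Fin N → Option Bool) → Bool)
    (hbicolor : ∀ e ∈ K, cubeDim e = 1 → ∀ u ∈ K, ∀ v ∈ K,
      isVert u → isVert v → faceLe u e → faceLe v e → u ≠ v → color u ≠ color v)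
    (h : Fin N → Option Bool) (hh : h ∈ K) (hd : 1 ≤ cubeDim h) (b : Bool) :
    ((K.filter fun v => isVert v ∧ color v = b).filter fun v => faceLe v h).card
      = ((K.filter fun v => isVert v ∧ color v = !b).filter fun v => faceLe v h).card := by
  classical
  obtain ⟨j0, hj0'⟩ := Finset.card_pos.mp hd
  have hj0 : h j0 = none := (Finset.mem_filter.mp hj0').2
  set flip : (Fin N → Option Bool) → (Fin N → Option Bool) :=
    fun v j => if j = j0 then some (!((v j).getD true)) else v j with hflip
  have main : ∀ v ∈ K, isVert v → faceLe v h →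
      flip v ∈ K ∧ isVert (flip v) ∧ faceLe (flip v) h ∧
        color (flip v) = !color v ∧ flip (flip v) = v := by
    intro v hv hvV hvh
    obtain ⟨b0, hb0⟩ : ∃ b0, v j0 = some b0 := by
      cases hvj0 : v j0 with
      | none => exact absurd hvj0 (hvV j0)
      | some b0 => exact ⟨b0, rfl⟩
    have hflipj0 : flip v j0 = some (!b0) := by simp [hflip, hb0]
    have hflipne : ∀ j, j ≠ j0 → flip v j = v j := by
      intro j hj; simp [hflip, hj]
    have hfK : flip v ∈ K := by
      apply hK h hh
      intro j hj
      have hjne : j ≠ j0 := fun he => hj (he ▸ hj0)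
      rw [hflipne j hjne]
      rcases hvh j with h1 | h1
      · exact absurd h1 hj
      · exact h1.symm
    have hfV : isVert (flip v) := by
      intro j
      by_cases hj : j = j0
      · subst hj; rw [hflipj0]; simp
      · rw [hflipne j hj]; exact hvV j
    have hfh : faceLe (flip v) h := by
      intro j
      by_cases hj : j = j0
      · subst hj; exact Or.inl hj0
      · rw [hflipne j hj]; exact hvh j
    -- the edge through v in direction j0
    set e : Fin N → Option Bool := fun j => if j = j0 then none else v j with he
    have heK : e ∈ K := by
      apply hK h hh
      intro j hj
      have hjne : j ≠ j0 := fun h' => hj (h' ▸ hj0)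
      simp only [he, if_neg hjne]
      rcases hvh j with h1 | h1
      · exact absurd h1 hj
      · exact h1.symm
    have hedim : cubeDim e = 1 := by
      have : (Finset.univ.filter fun j => e j = none) = {j0} := by
        ext j
        simp only [Finset.mem_filter, Finset.mem_univ, true_and, Finset.mem_singleton, he]
        by_cases hj : j = j0
        · simp [hj]
        · simp [hj, hvV j]
      rw [cubeDim, this, Finset.card_singleton]
    have hve : faceLe v e := by
      intro j
      by_cases hj : j = j0
      · exact Or.inl (by simp [he, hj])
      · exact Or.inr (by simp [he, hj])
    have hfe : faceLe (flip v) e := by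
      intro j
      by_cases hj : j = j0
      · exact Or.inl (by simp [he, hj])
      · exact Or.inr (by rw [hflipne j hj]; simp [he, hj])
    have hne : v ≠ flip v := by
      intro hEq
      have := congrFun hEq j0
      rw [hb0, hflipj0] at this
      simp at this
    have hcol : color (flip v) = !color v := by
      have := hbicolor e heK hedim v hv (flip v) hfK hvV hfV hve hfe hne
      revert this
      cases color v <;> cases color (flip v) <;> simp
    have hinv : flip (flip v) = v := by
      funext j
      by_cases hj : j = j0
      · subst hj
        simp [hflip, hb0]
      · simp [hflip, hj]
    exact ⟨hfK, hfV, hfh, hcol, hinv⟩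
  apply Finset.card_bij' (fun v _ => flip v) (fun v _ => flip v)
  · intro v hv
    simp only [Finset.mem_filter] at hv ⊢
    obtain ⟨⟨hvK, hvV, hvc⟩, hvh⟩ := hv
    obtain ⟨h1, h2, h3, h4, _⟩ := main v hvK hvV hvh
    exact ⟨⟨h1, h2, by rw [h4, hvc]⟩, h3⟩
  · intro v hv
    simp only [Finset.mem_filter] at hv ⊢
    obtain ⟨⟨hvK, hvV, hvc⟩, hvh⟩ := hv
    obtain ⟨h1, h2, h3, h4, _⟩ := main v hvK hvV hvh
    exact ⟨⟨h1, h2, by rw [h4, hvc, Bool.not_not]⟩, h3⟩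
  · intro v hv
    simp only [Finset.mem_filter] at hv
    exact (main v hv.1.1 hv.1.2.1 hv.2).2.2.2.2
  · intro v hv
    simp only [Finset.mem_filter] at hv
    exact (main v hv.1.1 hv.1.2.1 hv.2).2.2.2.2

/-- Theorem 2.2: if `K` is a bicolored `n`-Eulerian finite cubical complex with
`n ≠ 0` (the link of every vertex has Euler characteristic `n`, and every edge has
one endpoint of each color), then the same number of vertices get each color; in
particular `K` has an even number of vertices. -/
theorem bicolored_eulerian_equal_colors {N : ℕ} (K : Finset (Fin N → Option Bool))
    (hK : IsCubicalComplex K)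
    (color : (Fin N → Option Bool) → Bool)
    (hbicolor : ∀ e ∈ K, cubeDim e = 1 → ∀ u ∈ K, ∀ v ∈ K,
      isVert u → isVert v → faceLe u e → faceLe v e → u ≠ v → color u ≠ color v)
    (n : ℤ) (hn : n ≠ 0)
    (hEuler : ∀ v ∈ K, isVert v →
      (∑ h ∈ K.filter (fun h => faceLe v h ∧ 1 ≤ cubeDim h),
        (-1 : ℤ) ^ (cubeDim h - 1)) = n) :
    (K.filter fun v => isVert v ∧ color v = true).card
        = (K.filter fun v => isVert v ∧ color v = false).card ∧
      Even (K.filter fun v => isVert v).card := by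
  classical
  have count : ∀ b : Bool,
      (n * (K.filter fun v => isVert v ∧ color v = b).card : ℤ)
        = ∑ h ∈ K, (if 1 ≤ cubeDim h then
            ((-1 : ℤ) ^ (cubeDim h - 1)) *
              ((K.filter fun v => isVert v ∧ color v = b).filter fun v => faceLe v h).card
          else 0) := by
    intro b
    set S := K.filter fun v => isVert v ∧ color v = b with hS
    calc (n * S.card : ℤ) = ∑ _v ∈ S, n := by
          rw [Finset.sum_const, nsmul_eq_mul, mul_comm]
      _ = ∑ v ∈ S, ∑ h ∈ K.filter (fun h => faceLe v h ∧ 1 ≤ cubeDim h),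
            (-1 : ℤ) ^ (cubeDim h - 1) := by
          refine Finset.sum_congr rfl fun v hv => ?_
          obtain ⟨hvK, hvV, _⟩ := Finset.mem_filter.mp hv
          exact (hEuler v hvK hvV).symm
      _ = ∑ v ∈ S, ∑ h ∈ K,
            (if faceLe v h ∧ 1 ≤ cubeDim h then (-1 : ℤ) ^ (cubeDim h - 1) else 0) := by
          simp [Finset.sum_filter]
      _ = ∑ h ∈ K, ∑ v ∈ S,
            (if faceLe v h ∧ 1 ≤ cubeDim h then (-1 : ℤ) ^ (cubeDim h - 1) else 0) :=
          Finset.sum_comm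
      _ = _ := by
          refine Finset.sum_congr rfl fun h _ => ?_
          by_cases hq : 1 ≤ cubeDim h
          · simp only [hq, and_true, if_true]
            rw [← Finset.sum_filter, Finset.sum_const, nsmul_eq_mul, mul_comm]
          · simp [hq]
  have hEq : ((K.filter fun v => isVert v ∧ color v = true).card : ℤ)
      = ((K.filter fun v => isVert v ∧ color v = false).card : ℤ) := by
    have h1 := count true
    have h2 := count false
    have hsame : (∑ h ∈ K, (if 1 ≤ cubeDim h then
            ((-1 : ℤ) ^ (cubeDim h - 1)) *
              ((K.filter fun v => isVert v ∧ color v = true).filter fun v => faceLe v h).card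
          else 0))
        = ∑ h ∈ K, (if 1 ≤ cubeDim h then
            ((-1 : ℤ) ^ (cubeDim h - 1)) *
              ((K.filter fun v => isVert v ∧ color v = false).filter fun v => faceLe v h).card
          else 0) := by
      refine Finset.sum_congr rfl fun h hhK => ?_
      by_cases hq : 1 ≤ cubeDim h
      · simp only [hq, if_true]
        have := flip_card_eq K hK color hbicolor h hhK hq true
        simp only [Bool.not_true] at this
        rw [this]
      · simp [hq]
    have : n * ((K.filter fun v => isVert v ∧ color v = true).card : ℤ)
        = n * ((K.filter fun v => isVert v ∧ color v = false).card : ℤ) := by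
      rw [h1, h2, hsame]
    exact mul_left_cancel₀ hn this
  have hcard : (K.filter fun v => isVert v ∧ color v = true).card
      = (K.filter fun v => isVert v ∧ color v = false).card := by
    exact_mod_cast hEq
  refine ⟨hcard, ?_⟩
  have hsplit : (K.filter fun v => isVert v ∧ color v = true).card
      + (K.filter fun v => isVert v ∧ color v = false).card
      = (K.filter fun v => isVert v).card := by
    rw [show (K.filter fun v => isVert v ∧ color v = true)
        = (K.filter fun v => isVert v).filter (fun v => color v = true) from by
          rw [Finset.filter_filter],
      show (K.filter fun v => isVert v ∧ color v = false)
        = (K.filter fun v => isVert v).filter (fun v => ¬ color v = true) from by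
          rw [Finset.filter_filter]; simp [Bool.not_eq_true]]
    exact Finset.card_filter_add_card_filter_not _
  rw [← hsplit, hcard]
  exact Even.add_self _
end

section
/- The derivative operator D on cubical posets acts as a derivation with respect to products: for cubical posets K1 and K2, there is an isomorphism of posets D(K1 × K2) ≅ (DK1 × K2) ⊔ (K1 × DK2). -/
/-- The three-element face poset `I = {0, 1, *}` of an interval. -/
def IntervalFace : Type := Option Bool

instance : PartialOrder IntervalFace where
  le a b := b = none ∨ a = b
  le_refl a := Or.inr rfl
  le_trans a b c hab hbc := by
    rcases hbc with h | h
    · exact Or.inl h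
    · exact h ▸ hab
  le_antisymm a b hab hba := by
    rcases hab with h | h
    · rcases hba with h' | h'
      · rw [h, h']
      · exact h'.symm
    · exact h

/-- `b` and `c` form an opposite pair: they are covered by their join and have no
meet. -/
def OppPair {α : Type*} [PartialOrder α] (b c : α) : Prop :=
  b ≠ c ∧ (∃ s : α, IsLUB {b, c} s ∧ b ⋖ s ∧ c ⋖ s) ∧ ¬ ∃ z : α, z ≤ b ∧ z ≤ c

/-- An unordered pair that is an opposite pair. -/
def OppSym {α : Type*} [PartialOrder α] (s : Sym2 α) : Prop :=
  ∃ b c : α, s = Sym2.mk b c ∧ OppPair b c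

/-- The derivative complex `DK`: unordered opposite pairs `{b,c}` ordered
componentwise (the quotient of the ordered-pair poset `NK` by the swap). -/
def DerivPoset (α : Type*) [PartialOrder α] : Type _ := {s : Sym2 α // OppSym s}

instance (α : Type*) [PartialOrder α] : PartialOrder (DerivPoset α) where
  le x y := ∃ b c b' c' : α,
    x.val = Sym2.mk b c ∧ y.val = Sym2.mk b' c' ∧ b ≤ b' ∧ c ≤ c'
  le_refl x := by
    obtain ⟨b, c, h, _⟩ := x.2
    exact ⟨b, c, b, c, h, h, le_refl b, le_refl c⟩
  le_trans x y z hxy hyz := by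
    obtain ⟨b, c, b', c', hx, hy, h1, h2⟩ := hxy
    obtain ⟨e, f, e', f', hy', hz, h3, h4⟩ := hyz
    rw [hy] at hy'
    rcases Sym2.eq_iff.mp hy' with ⟨hb, hc⟩ | ⟨hb, hc⟩
    · exact ⟨b, c, e', f', hx, hz, h1.trans (by rw [hb]; exact h3),
        h2.trans (by rw [hc]; exact h4)⟩
    · exact ⟨b, c, f', e', hx, by rw [hz, Sym2.eq_swap],
        h1.trans (by rw [hb]; exact h4), h2.trans (by rw [hc]; exact h3)⟩
  le_antisymm x y hxy hyx := by
    obtain ⟨b, c, b', c', hx, hy, h1, h2⟩ := hxy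
    obtain ⟨e, f, e', f', hy', hx', h3, h4⟩ := hyx
    apply Subtype.ext
    rw [hy] at hy'
    rw [hx] at hx'
    rw [hx, hy]
    rcases Sym2.eq_iff.mp hy' with ⟨hb, hc⟩ | ⟨hb, hc⟩ <;>
      rcases Sym2.eq_iff.mp hx' with ⟨hb', hc'⟩ | ⟨hb', hc'⟩
    · have h3' : b' ≤ b := by rw [hb, hb']; exact h3
      have h4' : c' ≤ c := by rw [hc, hc']; exact h4
      rw [le_antisymm h1 h3', le_antisymm h2 h4']
    · have h3' : b' ≤ c := by rw [hb, hc']; exact h3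
      have h4' : c' ≤ b := by rw [hc, hb']; exact h4
      rw [le_antisymm h1 (h3'.trans (h2.trans h4')),
        le_antisymm h2 (h4'.trans (h1.trans h3'))]
    · have h3' : c' ≤ b := by rw [hc, hb']; exact h3
      have h4' : b' ≤ c := by rw [hb, hc']; exact h4
      rw [le_antisymm h1 (h4'.trans (h2.trans h3')),
        le_antisymm h2 (h3'.trans (h1.trans h4'))]
    · have h3' : c' ≤ c := by rw [hc, hc']; exact h3
      have h4' : b' ≤ b := by rw [hb, hb']; exact h4
      rw [le_antisymm h1 h4', le_antisymm h2 h3']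

/-!
A cover in a product poset moves exactly one coordinate. If the two members of an opposite
pair in `α × β` were covered by their join in different coordinates, say
`(b₁, b₂) ⋖ (s₁, b₂)` and `(s₁, c₂) ⋖ (s₁, b₂)`, then `(b₁, c₂)` would be a common lower bound.
So an opposite pair of `α × β` agrees in one coordinate and is an opposite pair in the other,
which is exactly an element of `DerivPoset α × β ⊕ α × DerivPoset β`. Pairs of different
kinds are incomparable, again by the no-meet condition.
-/

namespace DerivPoset

variable {α : Type*} [PartialOrder α]

theorem le_iff_of_val_eq {x y : DerivPoset α} {b c b' c' : α}
    (hx : x.val = s(b, c)) (hy : y.val = s(b', c')) :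
    x ≤ y ↔ b ≤ b' ∧ c ≤ c' ∨ b ≤ c' ∧ c ≤ b' := by
  constructor
  · rintro ⟨e, f, e', f', he, he', h1, h2⟩
    rcases Sym2.eq_iff.mp (hx.symm.trans he) with ⟨rfl, rfl⟩ | ⟨rfl, rfl⟩ <;>
      rcases Sym2.eq_iff.mp (hy.symm.trans he') with ⟨rfl, rfl⟩ | ⟨rfl, rfl⟩ <;> tauto
  · rintro (⟨h1, h2⟩ | ⟨h1, h2⟩)
    · exact ⟨b, c, b', c', hx, hy, h1, h2⟩
    · exact ⟨b, c, c', b', hx, by rw [hy, Sym2.eq_swap], h1, h2⟩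

end DerivPoset

section Prod

variable {α β : Type*} [PartialOrder α] [PartialOrder β]

theorem isLUB_singleton_iff {y z : β} : IsLUB {y} z ↔ z = y :=
  ⟨fun h => h.unique isLUB_singleton, fun h => h ▸ isLUB_singleton⟩

theorem isLUB_pair_prodMk_left_iff {b c : α} {y : β} {p : α × β} :
    IsLUB {(b, y), (c, y)} p ↔ IsLUB {b, c} p.1 ∧ p.2 = y := by
  simp [isLUB_prod, Set.image_pair, isLUB_singleton_iff]

theorem isLUB_pair_prodMk_right_iff {x : α} {b c : β} {p : α × β} :
    IsLUB {(x, b), (x, c)} p ↔ p.1 = x ∧ IsLUB {b, c} p.2 := by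
  simp [isLUB_prod, Set.image_pair, isLUB_singleton_iff]

theorem oppPair_prodMk_left_iff {b c : α} {y : β} :
    OppPair (b, y) (c, y) ↔ OppPair b c := by
  refine and_congr (by simp) (and_congr ⟨?_, ?_⟩ ⟨?_, ?_⟩)
  · rintro ⟨⟨s, t⟩, hlub, hbs, hcs⟩
    obtain ⟨hs, rfl⟩ := isLUB_pair_prodMk_left_iff.mp hlub
    exact ⟨s, hs, Prod.mk_covBy_mk_iff_left.mp hbs, Prod.mk_covBy_mk_iff_left.mp hcs⟩
  · rintro ⟨s, hlub, hbs, hcs⟩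
    exact ⟨(s, y), isLUB_pair_prodMk_left_iff.mpr ⟨hlub, rfl⟩,
      Prod.mk_covBy_mk_iff_left.mpr hbs, Prod.mk_covBy_mk_iff_left.mpr hcs⟩
  · rintro hnm ⟨z, hzb, hzc⟩
    exact hnm ⟨(z, y), ⟨hzb, le_rfl⟩, ⟨hzc, le_rfl⟩⟩
  · rintro hnm ⟨z, hzb, hzc⟩
    exact hnm ⟨z.1, hzb.1, hzc.1⟩

theorem oppPair_prodMk_right_iff {x : α} {b c : β} :
    OppPair (x, b) (x, c) ↔ OppPair b c := by
  refine and_congr (by simp) (and_congr ⟨?_, ?_⟩ ⟨?_, ?_⟩)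
  · rintro ⟨⟨t, s⟩, hlub, hbs, hcs⟩
    obtain ⟨rfl, hs⟩ := isLUB_pair_prodMk_right_iff.mp hlub
    exact ⟨s, hs, Prod.mk_covBy_mk_iff_right.mp hbs, Prod.mk_covBy_mk_iff_right.mp hcs⟩
  · rintro ⟨s, hlub, hbs, hcs⟩
    exact ⟨(x, s), isLUB_pair_prodMk_right_iff.mpr ⟨rfl, hlub⟩,
      Prod.mk_covBy_mk_iff_right.mpr hbs, Prod.mk_covBy_mk_iff_right.mpr hcs⟩
  · rintro hnm ⟨z, hzb, hzc⟩
    exact hnm ⟨(x, z), ⟨le_rfl, hzb⟩, ⟨le_rfl, hzc⟩⟩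
  · rintro hnm ⟨z, hzb, hzc⟩
    exact hnm ⟨z.2, hzb.2, hzc.2⟩

theorem OppPair.snd_eq_or_fst_eq {b c : α × β} (h : OppPair b c) : b.2 = c.2 ∨ b.1 = c.1 := by
  obtain ⟨-, ⟨s, -, hbs, hcs⟩, hnm⟩ := h
  rcases Prod.mk_covBy_mk_iff.mp hbs with ⟨hb₁, hb₂⟩ | ⟨hb₂, hb₁⟩ <;>
    rcases Prod.mk_covBy_mk_iff.mp hcs with ⟨hc₁, hc₂⟩ | ⟨hc₂, hc₁⟩
  · exact .inl (hb₂.trans hc₂.symm)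
  · exact (hnm ⟨(b.1, c.2), ⟨le_rfl, hb₂ ▸ hc₂.le⟩, ⟨hc₁ ▸ hb₁.le, le_rfl⟩⟩).elim
  · exact (hnm ⟨(c.1, b.2), ⟨hb₁ ▸ hc₁.le, le_rfl⟩, ⟨le_rfl, hc₂ ▸ hb₂.le⟩⟩).elim
  · exact .inr (hb₁.trans hc₁.symm)

end Prod

namespace DerivPoset

variable {α β : Type*} [PartialOrder α] [PartialOrder β]

def ofSumProd : DerivPoset α × β ⊕ α × DerivPoset β → DerivPoset (α × β)
  | .inl (d, y) => ⟨d.val.map (·, y), by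
      obtain ⟨b, c, h, hbc⟩ := d.2
      exact ⟨(b, y), (c, y), congrArg (Sym2.map (·, y)) h, oppPair_prodMk_left_iff.mpr hbc⟩⟩
  | .inr (x, d) => ⟨d.val.map (x, ·), by
      obtain ⟨b, c, h, hbc⟩ := d.2
      exact ⟨(x, b), (x, c), congrArg (Sym2.map (x, ·)) h, oppPair_prodMk_right_iff.mpr hbc⟩⟩

theorem val_ofSumProd_inl {d : DerivPoset α} {b c : α} (hd : d.val = s(b, c)) (y : β) :
    (ofSumProd (.inl (d, y))).val = s((b, y), (c, y)) :=
  congrArg (Sym2.map (·, y)) hd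

theorem val_ofSumProd_inr (x : α) {d : DerivPoset β} {b c : β} (hd : d.val = s(b, c)) :
    (ofSumProd (.inr (x, d))).val = s((x, b), (x, c)) :=
  congrArg (Sym2.map (x, ·)) hd

theorem ofSumProd_le_ofSumProd_iff {a a' : DerivPoset α × β ⊕ α × DerivPoset β} :
    ofSumProd a ≤ ofSumProd a' ↔ a ≤ a' := by
  rcases a with ⟨d, y⟩ | ⟨x, d⟩ <;> rcases a' with ⟨d', y'⟩ | ⟨x', d'⟩ <;>
    obtain ⟨b, c, hd, -⟩ := d.2 <;> obtain ⟨b', c', hd', h'⟩ := d'.2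
  · simp only [le_iff_of_val_eq (val_ofSumProd_inl hd y) (val_ofSumProd_inl hd' y'),
      Sum.inl_le_inl_iff, Prod.mk_le_mk, le_iff_of_val_eq hd hd']
    tauto
  · rw [le_iff_of_val_eq (val_ofSumProd_inl hd y) (val_ofSumProd_inr x' hd')]
    refine iff_of_false ?_ Sum.not_inl_le_inr
    rintro (⟨⟨-, h₁⟩, -, h₂⟩ | ⟨⟨-, h₁⟩, -, h₂⟩)
    exacts [h'.2.2 ⟨y, h₁, h₂⟩, h'.2.2 ⟨y, h₂, h₁⟩]
  · rw [le_iff_of_val_eq (val_ofSumProd_inr x hd) (val_ofSumProd_inl hd' y')]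
    refine iff_of_false ?_ Sum.not_inr_le_inl
    rintro (⟨⟨h₁, -⟩, h₂, -⟩ | ⟨⟨h₁, -⟩, h₂, -⟩)
    exacts [h'.2.2 ⟨x, h₁, h₂⟩, h'.2.2 ⟨x, h₂, h₁⟩]
  · simp only [le_iff_of_val_eq (val_ofSumProd_inr x hd) (val_ofSumProd_inr x' hd'),
      Sum.inr_le_inr_iff, Prod.mk_le_mk, le_iff_of_val_eq hd hd']
    tauto

theorem ofSumProd_surjective : Function.Surjective (ofSumProd (α := α) (β := β)) := by
  rintro ⟨_, ⟨b₁, b₂⟩, ⟨c₁, c₂⟩, rfl, h⟩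
  rcases h.snd_eq_or_fst_eq with rfl | rfl
  · exact ⟨.inl (⟨s(b₁, c₁), b₁, c₁, rfl, oppPair_prodMk_left_iff.mp h⟩, b₂), rfl⟩
  · exact ⟨.inr (b₁, ⟨s(b₂, c₂), b₂, c₂, rfl, oppPair_prodMk_right_iff.mp h⟩), rfl⟩

noncomputable def prodOrderIso : DerivPoset (α × β) ≃o DerivPoset α × β ⊕ α × DerivPoset β :=
  (OrderIso.ofSurjective (OrderEmbedding.ofMapLEIff ofSumProd fun _ _ =>
    ofSumProd_le_ofSumProd_iff) ofSumProd_surjective).symm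

end DerivPoset

theorem derivative_of_product_general {K1 K2 : Type*} [PartialOrder K1] [PartialOrder K2] :
    Nonempty (DerivPoset (K1 × K2) ≃o (DerivPoset K1 × K2 ⊕ K1 × DerivPoset K2)) :=
  ⟨DerivPoset.prodOrderIso⟩

/-- The derivative operator acts as a derivation:
`D(K1 × K2) ≅ (DK1 × K2) ⊔ (K1 × DK2)` for cubical posets `K1`, `K2`. -/
theorem derivative_of_product {K1 K2 : Type*} [PartialOrder K1] [PartialOrder K2]
    (rank1 : K1 → ℕ) (rank2 : K2 → ℕ)
    (hcub1 : ∀ x : K1, Nonempty (Set.Iic x ≃o (Fin (rank1 x) → IntervalFace)))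
    (hcub2 : ∀ x : K2, Nonempty (Set.Iic x ≃o (Fin (rank2 x) → IntervalFace))) :
    Nonempty (DerivPoset (K1 × K2) ≃o (DerivPoset K1 × K2 ⊕ K1 × DerivPoset K2)) :=
  derivative_of_product_general
end

section
/- Let K be a finite cubical poset of dimension d and let the degree-0 map γ: C_*(SK) → C_*(SNK) over Z/2 be defined on a flag (a_0 < ··· < a_r) of K as the sum of all flags (e_0 < ··· < e_r) in NK with j(e_i) = a_i for all i, where j(b,c) = b ∨ c. Then for every flag (e_0 < ··· < e_r) in NK there is exactly one flag in SK whose γ-expansion contains it, namely (j(e_0) < ··· < j(e_r)); hence γ applied to the sum of all r-flags of K equals the sum of all r-flags of NK plus the sum of r-flags of the rank-selected part, in the precise form γP_i = (S(NK) + S(NK)_{[d−1,d−i−1]}) ∩ C_i(NK) where P_i = (S(K) + S(K)_{[d,d−i]}) ∩ C_i(K). -/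
/-- The poset `NK` of ordered opposite pairs, ordered componentwise. -/
def NKt (K : Type*) [PartialOrder K] : Type _ := {p : K × K // OppPair p.1 p.2}

instance (K : Type*) [PartialOrder K] : PartialOrder (NKt K) :=
  inferInstanceAs (PartialOrder {p : K × K // OppPair p.1 p.2})

/-- The join map `j : NK → K`, `(b,c) ↦ b ∨ c`. -/
noncomputable def jmap {K : Type*} [PartialOrder K] (e : NKt K) : K :=
  (e.2.2.1).choose

/-- An `r`-flag in a poset: a strictly increasing chain of `r+1` elements. -/
def PosetFlag (α : Type*) [Preorder α] (r : ℕ) : Type _ :=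
  {c : Fin (r + 1) → α // StrictMono c}

/-!
In a cubical poset the lower interval of `x` is isomorphic to `I^(rank x)`, so it has
`3 ^ rank x` elements. If `b ⋖ s`, the isomorphism for `s` sends `b` to a vector covered by the
top of `I^(rank s)`, whose lower interval has a third as many elements; hence
`rank s = rank b + 1`. Applied to an opposite pair `(b, c)`, this gives
`rank (b ∨ c) = rank b + 1`, which shifts the rank selection `[d, d - i]` of `K` to
`[d - 1, d - i - 1]` in `NK`. Separately, `j` is strictly monotone, so `j ∘ e` is the unique flag
of `K` whose `γ`-expansion contains `e`.
-/

open Set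

namespace IntervalFace

lemma card : Nat.card IntervalFace = 3 := by
  simp [IntervalFace]

lemma le_iff {a b : IntervalFace} : a ≤ b ↔ b = none ∨ a = b := Iff.rfl

lemma lt_iff {a b : IntervalFace} : a < b ↔ a ≠ none ∧ b = none := by
  rw [lt_iff_le_and_ne, le_iff]
  constructor
  · rintro ⟨rfl | rfl, hne⟩
    · exact ⟨hne, rfl⟩
    · exact absurd rfl hne
  · rintro ⟨ha, rfl⟩
    exact ⟨Or.inl rfl, ha⟩

lemma Iic_none : Iic (α := IntervalFace) none = univ :=
  eq_univ_of_forall fun _ => le_iff.mpr (Or.inl rfl)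

lemma Iic_of_ne_none {a : IntervalFace} (ha : a ≠ none) : Iic a = {a} := by
  ext x
  simp only [mem_Iic, mem_singleton_iff, le_iff, ha, false_or]

lemma card_Iic_of_covBy {a b : IntervalFace} (h : a ⋖ b) :
    Nat.card (Iic b) = 3 * Nat.card (Iic a) := by
  obtain ⟨ha, rfl⟩ := lt_iff.mp h.lt
  rw [Iic_none, Iic_of_ne_none ha, Nat.card_univ, card, Nat.card_unique]

end IntervalFace

lemma Nat.card_Iic_pi {ι : Type*} [Fintype ι] {α : ι → Type*} [∀ i, Preorder (α i)]
    (v : ∀ i, α i) : Nat.card (Iic v) = ∏ i, Nat.card (Iic (v i)) := by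
  rw [← pi_univ_Iic, Nat.card_congr (Equiv.Set.univPi _), Nat.card_pi]

lemma Nat.card_Iic_pi_of_covBy {ι : Type*} [Fintype ι] {α : ι → Type*}
    [∀ i, PartialOrder (α i)] {c : ℕ}
    (hα : ∀ i {a b : α i}, a ⋖ b → Nat.card (Iic b) = c * Nat.card (Iic a))
    {v w : ∀ i, α i} (h : v ⋖ w) : Nat.card (Iic w) = c * Nat.card (Iic v) := by
  classical
  obtain ⟨i, hi, hrest⟩ := Pi.covBy_iff.mp h
  rw [Nat.card_Iic_pi, Nat.card_Iic_pi, ← Finset.mul_prod_erase _ _ (Finset.mem_univ i),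
    ← Finset.mul_prod_erase _ _ (Finset.mem_univ i), hα i hi, mul_assoc]
  congr 2
  exact Finset.prod_congr rfl fun j hj => by rw [hrest j (Finset.ne_of_mem_erase hj)]

lemma OrderIso.card_Iic_apply {α β : Type*} [Preorder α] [Preorder β] (e : α ≃o β)
    (a : α) :
    Nat.card (Iic (e a)) = Nat.card (Iic a) := by
  rw [← e.image_Iic, Nat.card_image_of_injective e.injective]

lemma Set.Iic.card_Iic_coe {α : Type*} [Preorder α] {s : α} (x : Iic s) :
    Nat.card (Iic (x : α)) = Nat.card (Iic x) := by
  rw [← image_subtype_val_Iic_Iic, Nat.card_image_of_injective Subtype.val_injective]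

section Cubical

variable {K : Type*} [PartialOrder K] (rank : K → ℕ)

lemma card_Iic_eq_three_pow
    (hcubical : ∀ x : K, Nonempty (Iic x ≃o (Fin (rank x) → IntervalFace))) (x : K) :
    Nat.card (Iic x) = 3 ^ rank x := by
  obtain ⟨f⟩ := hcubical x
  rw [Nat.card_congr f.toEquiv, Nat.card_fun, Nat.card_fin, IntervalFace.card]

lemma rank_add_one_of_covBy
    (hcubical : ∀ x : K, Nonempty (Iic x ≃o (Fin (rank x) → IntervalFace))) {b s : K}
    (h : b ⋖ s) : rank b + 1 = rank s := by
  obtain ⟨f⟩ := hcubical s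
  have hb : (⟨b, h.le⟩ : Iic s) ⋖ ⊤ := covBy_top_iff.mpr (Iic.isCoatom_iff.mpr h)
  have hcard := Nat.card_Iic_pi_of_covBy (fun _ _ _ => IntervalFace.card_Iic_of_covBy)
    ((apply_covBy_apply_iff f).mpr hb)
  rw [f.card_Iic_apply, f.card_Iic_apply, ← Iic.card_Iic_coe, ← Iic.card_Iic_coe,
    Iic.coe_top, card_Iic_eq_three_pow rank hcubical, card_Iic_eq_three_pow rank hcubical,
    ← pow_succ'] at hcard
  exact (Nat.pow_right_injective (by norm_num) hcard).symm

end Cubical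

lemma PosetFlag.existsUnique_comp {α β : Type*} [Preorder α] [Preorder β] {f : α → β}
    (hf : StrictMono f) {r : ℕ} (e : PosetFlag α r) :
    ∃! a : PosetFlag β r, ∀ m, f (e.val m) = a.val m :=
  ⟨⟨f ∘ e.val, hf.comp e.property⟩, fun _ => rfl,
    fun _ ha => Subtype.ext (funext fun m => (ha m).symm)⟩

section NK

variable {K : Type*} [PartialOrder K]

lemma jmap_spec (e : NKt K) :
    IsLUB {e.val.1, e.val.2} (jmap e) ∧ e.val.1 ⋖ jmap e ∧ e.val.2 ⋖ jmap e :=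
  e.property.2.1.choose_spec

lemma jmap_strictMono : StrictMono (jmap (K := K)) := by
  intro e f hef
  obtain ⟨he, he₁, he₂⟩ := jmap_spec e
  obtain ⟨-, hf₁, hf₂⟩ := jmap_spec f
  have hle : e.val ≤ f.val := hef.le
  refine (he.2 ?_).lt_of_ne fun heq => hef.ne (Subtype.ext (Prod.ext ?_ ?_))
  · rintro x (rfl | rfl)
    · exact hle.1.trans hf₁.le
    · exact hle.2.trans hf₂.le
  -- `f.1` lies between `e.1` and `j e = j f`, strictly below the latter, so equals `e.1`.
  · exact ((he₁.eq_or_eq hle.1 (heq ▸ hf₁.le)).resolve_right (heq ▸ hf₁.ne)).symm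
  · exact ((he₂.eq_or_eq hle.2 (heq ▸ hf₂.le)).resolve_right (heq ▸ hf₂.ne)).symm

end NK

theorem gamma_of_rank_selected_flags_general {K : Type*} [PartialOrder K]
    (rank : K → ℕ) (d : ℕ)
    (hcubical : ∀ x : K, Nonempty (Set.Iic x ≃o (Fin (rank x) → IntervalFace))) :
    (∀ (r : ℕ) (e : PosetFlag (NKt K) r),
      ∃! a : PosetFlag K r, ∀ m : Fin (r + 1), jmap (e.val m) = a.val m) ∧
    (∀ i : ℕ,
      {e : PosetFlag (NKt K) i | ¬ ∀ m : Fin (i + 1), d - i ≤ rank (jmap (e.val m))}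
        = {e : PosetFlag (NKt K) i |
            ¬ ∀ m : Fin (i + 1), d - i - 1 ≤ rank ((e.val m).val.1)}) := by
  refine ⟨fun r => PosetFlag.existsUnique_comp jmap_strictMono, fun i => ?_⟩
  have hrank (e : NKt K) : rank (jmap e) = rank e.val.1 + 1 :=
    (rank_add_one_of_covBy rank hcubical (jmap_spec e).2.1).symm
  ext e
  simp only [mem_ofPred_eq, hrank, Nat.sub_sub, Nat.sub_le_iff_le_add, add_assoc, add_comm 1 i]

/-- For a finite cubical poset `K` of dimension `d`: (1) every flag `e` of `NK`
lies in the `γ`-expansion of exactly one flag of `K`, namely `j ∘ e`; (2) hence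
`γ P_i = (S(NK) + S(NK)_{[d−1,d−i−1]}) ∩ C_i(NK)` where
`P_i = (S(K) + S(K)_{[d,d−i]}) ∩ C_i(K)`: the `i`-flags of `NK` whose `j`-image
flag is not contained in ranks `{d−i,…,d}` are exactly the `i`-flags of `NK`
not contained in `NK`-ranks `{d−i−1,…,d−1}` (the `NK`-rank of `(b,c)` being
the rank of `b`). -/
theorem gamma_of_rank_selected_flags {K : Type*} [PartialOrder K] [Fintype K]
    (rank : K → ℕ) (d : ℕ)
    (hcubical : ∀ x : K, Nonempty (Set.Iic x ≃o (Fin (rank x) → IntervalFace)))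
    (hdim : ∀ x : K, rank x ≤ d) :
    (∀ (r : ℕ) (e : PosetFlag (NKt K) r),
      ∃! a : PosetFlag K r, ∀ m : Fin (r + 1), jmap (e.val m) = a.val m) ∧
    (∀ i : ℕ,
      {e : PosetFlag (NKt K) i | ¬ ∀ m : Fin (i + 1), d - i ≤ rank (jmap (e.val m))}
        = {e : PosetFlag (NKt K) i |
            ¬ ∀ m : Fin (i + 1), d - i - 1 ≤ rank ((e.val m).val.1)}) :=
  gamma_of_rank_selected_flags_general rank d hcubical
end

section
/- Let K be a finite cubical complex of dimension d in which the link of every face has even Euler characteristic. Then the Z/2-chain P_i = (S(K) + S(K)_{[d,d−i]}) ∩ C_i(K) (the sum of all i-flags of K not entirely contained in ranks {d−i,...,d}) is a cycle: ∂P_i = 0 over Z/2, for 0 < i < d. -/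
/-!
Deleting an entry of an `(i+1)`-flag to obtain a given `i`-flag `b` is the same as inserting an
element `z` into `b`, so the count splits according to the insertion position. Every `Iic x` is
a cube, in which the antipodal map pairs up the proper faces of any given dimension and the
relative complement in `[y, x]` pairs up the elements of the open interval `(y, x)`. Hence
insertions below the bottom of `b` (with any constraint on the rank of `z`) and between two
consecutive entries of `b` come in pairs, and insertions above the top come in pairs by the
link hypothesis. If `b` lies in the top ranks, so does every insertion above its bottom entry:
such flags are not counted, and only insertions at the bottom of `b` remain.
-/

theorem even_natCard_subtype_of_involution {α : Type*} [Finite α] {p : α → Prop} (f : α → α)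
    (hp : ∀ a, p a → p (f a)) (hinv : ∀ a, p a → f (f a) = a) (hne : ∀ a, p a → f a ≠ a) :
    Even (Nat.card {a // p a}) := by
  classical
  have := Fintype.ofFinite {a // p a}
  let σ : Equiv.Perm {a // p a} :=
    Function.Involutive.toPerm (fun a => ⟨f a, hp a a.2⟩) fun a => Subtype.ext (hinv a a.2)
  have hsupp : σ.support = Finset.univ :=
    Finset.eq_univ_of_forall fun a =>
      Equiv.Perm.mem_support.mpr fun h => hne a a.2 (congrArg Subtype.val h)
  rw [Nat.card_eq_fintype_card, even_iff_two_dvd, ← Finset.card_univ, ← hsupp]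
  exact Equiv.Perm.two_dvd_card_support (Equiv.ext fun a => Subtype.ext (hinv a a.2))

namespace IntervalFace

instance : DecidableEq IntervalFace := inferInstanceAs (DecidableEq (Option Bool))

instance : Fintype IntervalFace := inferInstanceAs (Fintype (Option Bool))

instance : OrderTop IntervalFace where
  top := (none : Option Bool)
  le_top _ := Or.inl rfl

instance : DecidableLE IntervalFace := fun a b => decidable_of_iff (b = ⊤ ∨ a = b) Iff.rfl

def antipode (a : IntervalFace) : IntervalFace := Option.map not a

-- The relative complement of `b` in the interval `[a, ⊤]`, which has at most two elements.
def complIn (a b : IntervalFace) : IntervalFace := if b = ⊤ then a else ⊤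

lemma antipode_eq_top_iff (a : IntervalFace) : antipode a = ⊤ ↔ a = ⊤ := by revert a; decide

lemma antipode_antipode (a : IntervalFace) : antipode (antipode a) = a := by revert a; decide

lemma antipode_ne_self {a : IntervalFace} : a ≠ ⊤ → antipode a ≠ a := by revert a; decide

lemma le_complIn (a b : IntervalFace) : a ≤ complIn a b := by revert a b; decide

lemma complIn_complIn {a b : IntervalFace} : a ≤ b → complIn a (complIn a b) = b := by
  revert a b; decide

lemma complIn_self (a : IntervalFace) : complIn a a = ⊤ := by revert a; decide

lemma complIn_top (a : IntervalFace) : complIn a ⊤ = a := by revert a; decide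

lemma complIn_ne_self (a : IntervalFace) {b : IntervalFace} : b ≠ ⊤ → complIn a b ≠ b := by
  revert a b; decide

lemma natCard_Iic (a : IntervalFace) : Nat.card (Set.Iic a) = if a = ⊤ then 3 else 1 := by
  rw [Nat.card_eq_fintype_card, Fintype.card_subtype]
  revert a; decide

variable {ι : Type*}

lemma exists_apply_ne_top {Y : ι → IntervalFace} (h : Y < ⊤) : ∃ c, Y c ≠ ⊤ := by
  by_contra! h'
  exact h.ne (funext h')

variable [Fintype ι]

open Finset in
def dim (Y : ι → IntervalFace) : ℕ := #{c | Y c = ⊤}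

lemma natCard_Iic_pi (Y : ι → IntervalFace) : Nat.card (Set.Iic Y) = 3 ^ dim Y := by
  classical
  rw [← Set.pi_univ_Iic, Nat.card_congr (Equiv.Set.univPi _), Nat.card_pi]
  simp only [natCard_Iic, Finset.prod_ite, Finset.prod_const, one_pow, mul_one, dim]

lemma even_natCard_lt_top_and_dim (p : ℕ → Prop) :
    Even (Nat.card {Y : ι → IntervalFace // Y < ⊤ ∧ p (dim Y)}) := by
  have hdim (Y : ι → IntervalFace) : dim (antipode ∘ Y) = dim Y := by
    simp only [dim, Function.comp_apply, antipode_eq_top_iff]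
  refine even_natCard_subtype_of_involution (antipode ∘ ·)
    (fun Y ⟨hY, hp⟩ => ⟨?_, hdim Y ▸ hp⟩) (fun Y _ => funext fun c => antipode_antipode (Y c))
    fun Y ⟨hY, _⟩ => ?_
  · obtain ⟨c, hc⟩ := exists_apply_ne_top hY
    exact lt_top_iff_ne_top.mpr fun h => hc ((antipode_eq_top_iff _).mp (congrFun h c))
  · obtain ⟨c, hc⟩ := exists_apply_ne_top hY
    exact fun h => antipode_ne_self hc (congrFun h c)

lemma even_natCard_Ioo_top (Y₀ : ι → IntervalFace) : Even (Nat.card (Set.Ioo Y₀ ⊤)) := by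
  let f (Y : ι → IntervalFace) : ι → IntervalFace := fun c => complIn (Y₀ c) (Y c)
  have hle (Y) : Y₀ ≤ f Y := fun c => le_complIn _ _
  have hinv (Y) (h : Y₀ ≤ Y) : f (f Y) = Y := funext fun c => complIn_complIn (h c)
  have hY₀ : f Y₀ = ⊤ := funext fun c => complIn_self _
  have htop : f ⊤ = Y₀ := funext fun c => complIn_top _
  refine even_natCard_subtype_of_involution f (fun Y ⟨h₀, hlt⟩ => ⟨?_, ?_⟩)
    (fun Y h => hinv Y h.1.le) fun Y ⟨_, hlt⟩ => ?_
  · refine (hle Y).lt_of_ne fun h => hlt.ne ?_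
    rw [← hinv Y h₀.le, ← h, hY₀]
  · refine lt_top_iff_ne_top.mpr fun h => h₀.ne ?_
    rw [← hinv Y h₀.le, h, htop]
  · obtain ⟨c, hc⟩ := exists_apply_ne_top hlt
    exact fun h => complIn_ne_self _ hc (congrFun h c)

end IntervalFace

def IsCubical {K : Type*} [PartialOrder K] (rank : K → ℕ) : Prop :=
  ∀ x : K, Nonempty (Set.Iic x ≃o (Fin (rank x) → IntervalFace))

section CubicalPoset

variable {K : Type*} [PartialOrder K] {rank : K → ℕ} {ι : Type*} [Fintype ι]

lemma natCard_lt_and_eq_of_orderIso {β : Type*} [PartialOrder β] [OrderTop β] {x : K}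
    (e : Set.Iic x ≃o β) (q : K → Prop) :
    Nat.card {z : K // z < x ∧ q z} = Nat.card {Y : β // Y < ⊤ ∧ q (e.symm Y)} := by
  refine Nat.card_congr ((Equiv.subtypeSubtypeEquivSubtype fun h => h.1.le).symm.trans
    (e.toEquiv.subtypeEquiv fun w => ?_))
  change (w : K) < x ∧ q w ↔ e w < ⊤ ∧ q (e.symm (e w))
  rw [← e.map_top, e.lt_iff_lt, e.symm_apply_apply, ← Subtype.coe_lt_coe, Set.Iic.coe_top]

lemma IsCubical.natCard_Iic (hK : IsCubical rank) (x : K) : Nat.card (Set.Iic x) = 3 ^ rank x := by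
  obtain ⟨e⟩ := hK x
  rw [Nat.card_congr e.toEquiv, Nat.card_eq_fintype_card, Fintype.card_fun, Fintype.card_fin]
  rfl

lemma IsCubical.rank_mono (hK : IsCubical rank) : Monotone rank := fun z x h => by
  have : Finite (Set.Iic x) := Nat.finite_of_card_ne_zero (by simp [hK.natCard_Iic])
  have := Nat.card_mono (Set.toFinite _) (Set.Iic_subset_Iic.mpr h)
  rwa [hK.natCard_Iic, hK.natCard_Iic, Nat.pow_le_pow_iff_right (by norm_num)] at this

lemma IsCubical.rank_eq_dim (hK : IsCubical rank) {x : K} (e : Set.Iic x ≃o (ι → IntervalFace))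
    (w : Set.Iic x) : rank w = IntervalFace.dim (e w) := by
  have hIicK : Set.Iic w ≃ Set.Iic (w : K) :=
    Equiv.subtypeSubtypeEquivSubtype (p := (· ≤ x)) (q := (· ≤ (w : K))) fun h => h.trans w.2
  have hIicCube : Set.Iic w ≃ Set.Iic (e w) := e.toEquiv.subtypeEquiv fun _ => e.le_iff_le.symm
  have hcard := (hK.natCard_Iic w).symm.trans (Nat.card_congr hIicK.symm)
  rw [Nat.card_congr hIicCube, IntervalFace.natCard_Iic_pi] at hcard
  exact Nat.pow_right_injective (Nat.le_succ 2) hcard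

lemma IsCubical.even_natCard_lt_and_rank (hK : IsCubical rank) (x : K) (p : ℕ → Prop) :
    Even (Nat.card {z : K // z < x ∧ p (rank z)}) := by
  obtain ⟨e⟩ := hK x
  rw [natCard_lt_and_eq_of_orderIso e]
  have hrank (Y : Fin (rank x) → IntervalFace) : rank (e.symm Y) = IntervalFace.dim Y := by
    rw [hK.rank_eq_dim e, e.apply_symm_apply]
  simp only [hrank]
  exact IntervalFace.even_natCard_lt_top_and_dim p

lemma even_natCard_Ioo_of_orderIso {x y : K} (e : Set.Iic x ≃o (ι → IntervalFace))
    (hyx : y < x) : Even (Nat.card (Set.Ioo y x)) := by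
  have hIoo : Set.Ioo y x ≃ {z : K // z < x ∧ y < z} :=
    Equiv.subtypeEquivRight fun _ => and_comm
  have hiff (Y : ι → IntervalFace) :
      Y < ⊤ ∧ y < (e.symm Y : K) ↔ Y ∈ Set.Ioo (e ⟨y, Set.mem_Iic.mpr hyx.le⟩) ⊤ := by
    rw [Set.mem_Ioo, ← e.lt_symm_apply, ← Subtype.coe_lt_coe, and_comm]
  rw [Nat.card_congr hIoo, natCard_lt_and_eq_of_orderIso e,
    Nat.card_congr (Equiv.subtypeEquivRight hiff)]
  exact IntervalFace.even_natCard_Ioo_top _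

end CubicalPoset

namespace Fin

variable {α : Type*} {n : ℕ}

lemma forall_insertNth_iff {p : α → Prop} (m : Fin (n + 1)) (z : α) (b : Fin n → α) :
    (∀ j, p (insertNth (α := fun _ ↦ α) m z b j)) ↔ p z ∧ ∀ j, p (b j) := by
  rw [forall_iff_succAbove m]
  simp only [insertNth_apply_same, insertNth_apply_succAbove]

variable [Preorder α] {z : α} {b : Fin (n + 1) → α}

lemma lt_of_strictMono_insertNth_succ {j : Fin (n + 1)}
    (h : StrictMono (insertNth (α := fun _ ↦ α) j.succ z b)) : b j < z :=
  ((strictMono_insertNth_iff _ _ _).mp h).2.1 j castSucc_lt_succ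

lemma lt_of_strictMono_insertNth_castSucc {k : Fin (n + 1)}
    (h : StrictMono (insertNth (α := fun _ ↦ α) k.castSucc z b)) : z < b k :=
  ((strictMono_insertNth_iff _ _ _).mp h).2.2 k le_rfl

lemma strictMono_insertNth_zero_iff (hb : StrictMono b) :
    StrictMono (insertNth (α := fun _ ↦ α) 0 z b) ↔ z < b 0 :=
  ⟨lt_of_strictMono_insertNth_castSucc (k := 0), strictMono_insertNth_zero hb z⟩

lemma strictMono_insertNth_last_iff (hb : StrictMono b) :
    StrictMono (insertNth (α := fun _ ↦ α) (last (n + 1)) z b) ↔ b (last n) < z :=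
  ⟨lt_of_strictMono_insertNth_succ (j := last n), strictMono_insertNth_last hb z⟩

lemma strictMono_insertNth_castSucc_succ_iff (hb : StrictMono b) (k : Fin n) :
    StrictMono (insertNth (α := fun _ ↦ α) k.castSucc.succ z b) ↔
      b k.castSucc < z ∧ z < b k.succ := by
  refine ⟨fun h => ⟨lt_of_strictMono_insertNth_succ h, ?_⟩,
    fun h => strictMono_insertNth hb k z h.1 h.2⟩
  rw [succ_castSucc] at h
  exact lt_of_strictMono_insertNth_castSucc h

end Fin

namespace PosetFlag

variable {α : Type*} [Preorder α] {n : ℕ}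

def cofaceEquiv (P : (Fin (n + 2) → α) → Prop) (b : Fin (n + 1) → α) :
    {q : {a : PosetFlag α (n + 1) // P a.val} × Fin (n + 2) //
        (fun l : Fin (n + 1) => q.1.val.val (q.2.succAbove l)) = b} ≃
      Σ m : Fin (n + 2), {z : α // StrictMono (m.insertNth z b) ∧ P (m.insertNth z b)} where
  toFun q := ⟨q.1.2, q.1.1.1.1 q.1.2, by
    obtain ⟨⟨⟨a, hP⟩, m⟩, rfl⟩ := q
    have ha : m.insertNth (a.1 m) (fun l => a.1 (m.succAbove l)) = a.1 :=
      Fin.insertNth_self_removeNth m a.1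
    dsimp only
    rw [ha]
    exact ⟨a.2, hP⟩⟩
  invFun s := ⟨(⟨⟨_, s.2.2.1⟩, s.2.2.2⟩, s.1),
    funext (Fin.insertNth_apply_succAbove (α := fun _ ↦ α) s.1 s.2.1 b)⟩
  left_inv := fun ⟨⟨⟨⟨a, _⟩, _⟩, m⟩, hb⟩ => by
    subst hb
    exact Subtype.ext (Prod.ext (Subtype.ext (Subtype.ext (Fin.insertNth_self_removeNth m a))) rfl)
  right_inv := by
    rintro ⟨m, z, _⟩
    exact Sigma.ext rfl
      (heq_of_eq (Subtype.ext (Fin.insertNth_apply_same (α := fun _ ↦ α) m z b)))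

end PosetFlag

namespace IsCubical

variable {K : Type*} [PartialOrder K] {rank : K → ℕ} {n : ℕ} {b : Fin (n + 1) → K}

lemma even_natCard_strictMono_insertNth_succ (hK : IsCubical rank)
    (hlink : ∀ x : K, Even (Nat.card {z : K // x < z})) (hb : StrictMono b) (j : Fin (n + 1)) :
    Even (Nat.card {z : K // StrictMono (j.succ.insertNth z b)}) := by
  rcases j.eq_castSucc_or_eq_last with ⟨k, rfl⟩ | rfl
  · simp only [Fin.strictMono_insertNth_castSucc_succ_iff hb]
    obtain ⟨e⟩ := hK (b k.succ)
    exact even_natCard_Ioo_of_orderIso e (hb k.castSucc_lt_succ)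
  · simp only [Fin.succ_last, Fin.strictMono_insertNth_last_iff hb]
    exact hlink _

lemma even_natCard_strictMono_insertNth_not_forall_le (hK : IsCubical rank)
    (hlink : ∀ x : K, Even (Nat.card {z : K // x < z})) (hb : StrictMono b) (T : ℕ)
    (m : Fin (n + 2)) :
    Even (Nat.card
      {z : K // StrictMono (m.insertNth z b) ∧
        ¬ ∀ j, T ≤ rank (Fin.insertNth (α := fun _ ↦ K) m z b j)}) := by
  simp only [Fin.forall_insertNth_iff (p := (T ≤ rank ·))]
  rcases m.eq_zero_or_eq_succ with rfl | ⟨j, rfl⟩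
  · simp only [Fin.strictMono_insertNth_zero_iff hb]
    exact hK.even_natCard_lt_and_rank (b 0) fun r => ¬ (T ≤ r ∧ ∀ j, T ≤ rank (b j))
  · have hiff (z : K) :
        StrictMono (j.succ.insertNth z b) ∧ ¬ (T ≤ rank z ∧ ∀ j, T ≤ rank (b j)) ↔
          StrictMono (j.succ.insertNth z b) ∧ ¬ ∀ j, T ≤ rank (b j) :=
      and_congr_right fun h => not_congr <| and_iff_right_of_imp fun hB =>
        (hB j).trans (hK.rank_mono (Fin.lt_of_strictMono_insertNth_succ h).le)
    rw [Nat.card_congr (Equiv.subtypeEquivRight hiff)]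
    by_cases hB : ∀ j, T ≤ rank (b j)
    · simp [hB]
    · simpa only [hB, not_false_eq_true, and_true] using
        hK.even_natCard_strictMono_insertNth_succ hlink hb j

end IsCubical

theorem rank_selected_flag_chain_is_cycle_general {K : Type*} [PartialOrder K] [Fintype K]
    (rank : K → ℕ) (d : ℕ)
    (hcubical : ∀ x : K, Nonempty (Set.Iic x ≃o (Fin (rank x) → IntervalFace)))
    (hlink : ∀ x : K, Even (Nat.card {z : K // x < z}))
    (i : ℕ) :
    ∀ b : PosetFlag K i,
      Even (Nat.card
        {q : {a : PosetFlag K (i + 1) //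
                ¬ ∀ m : Fin (i + 2), d - (i + 1) ≤ rank (a.val m)} × Fin (i + 2) //
          (fun l : Fin (i + 1) => q.1.val.val (q.2.succAbove l)) = b.val}) := by
  intro b
  have hcard := (Nat.card_congr (PosetFlag.cofaceEquiv
    (fun a => ¬ ∀ m, d - (i + 1) ≤ rank (a m)) b.val)).trans Nat.card_sigma
  exact (congrArg Even hcard).mpr <| Finset.even_sum _ fun m _ =>
    IsCubical.even_natCard_strictMono_insertNth_not_forall_le hcubical hlink b.2 _ m

/-- Let `K` be a finite cubical poset of dimension `d` in which the link of every
face has even Euler characteristic (equivalently, every face lies strictly below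
an even number of faces).  Then for `0 < i+1 < d` the `ℤ/2`-chain
`P_{i+1} = (S(K) + S(K)_{[d,d−i−1]}) ∩ C_{i+1}(K)` (sum of all `(i+1)`-flags not
contained in ranks `{d−i−1,…,d}`) is a cycle: each `i`-flag arises an even number
of times by deleting one entry of a flag of `P_{i+1}`. -/
theorem rank_selected_flag_chain_is_cycle {K : Type*} [PartialOrder K] [Fintype K]
    (rank : K → ℕ) (d : ℕ)
    (hcubical : ∀ x : K, Nonempty (Set.Iic x ≃o (Fin (rank x) → IntervalFace)))
    (hdim : ∀ x : K, rank x ≤ d)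
    (hlink : ∀ x : K, Even (Nat.card {z : K // x < z}))
    (i : ℕ) (hi : i + 1 < d) :
    ∀ b : PosetFlag K i,
      Even (Nat.card
        {q : {a : PosetFlag K (i + 1) //
                ¬ ∀ m : Fin (i + 2), d - (i + 1) ≤ rank (a.val m)} × Fin (i + 2) //
          (fun l : Fin (i + 1) => q.1.val.val (q.2.succAbove l)) = b.val}) :=
  rank_selected_flag_chain_is_cycle_general rank d hcubical hlink i
end
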